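/- arXiv:1101.2785 — 4 statements merged into one kernel-verified Lean document; each statement's English description precedes it below -/
import Mathlib

section
/- Fix m ≥ 1, a horizon N with N ≡ 1 (mod m), an n×n real matrix A, n×p real matrices B₁,…,B_m, a symmetric n×n matrix q, a symmetric p×p matrix r, p×n feedback matrices K₁,…,K_m, and terminal cost functions F₁,…,F_m : ℝⁿ → ℝ. Suppose the terminal-cost condition holds: for every σ ∈ {1,…,m} and every x ∈ ℝⁿ, F_{σ⁺}((A − B_{σ⁺}K_{σ⁺})x) + xᵀ q x + (K_{σ⁺}x)ᵀ r (K_{σ⁺}x) ≤ F_σ(x), where σ⁺ = (σ mod m) + 1. Fix k ∈ ℕ, an initial state x₀ ∈ ℝⁿ and inputs u₀,…,u_{N−1} ∈ ℝᵖ, and define states by x_{i+1} = A x_i + B_{σ(k+i)} u_i and the cost J_k(x₀, u) = F_{σ(k)}(x_N) + Σ_{i=0}^{N−1} (x_iᵀ q x_i + u_iᵀ r u_i). Define the shifted candidate inputs û_i = u_{i+1} for 0 ≤ i ≤ N−2 and û_{N−1} = −K_{σ(k+1)} x_N, with candidate states starting from x₁ and following x̂_{i+1} = A x̂_i + B_{σ(k+1+i)}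 û_i. Then x̂_i = x_{i+1} for 0 ≤ i ≤ N−1, σ(k+N) = σ(k+1), and J_{k+1}(x₁, û) ≤ J_k(x₀, u) − x₀ᵀ q x₀ − u₀ᵀ r u₀. -/
open Matrix Finset

/-! The shifted plan reproduces the old trajectory from `x₁` on, so the two costs share the
stages `1, …, N-1`.  The candidate drops the stage at `x₀` and, at `x_N`, spends one
closed-loop stage plus the terminal cost of the next channel; since `N ≡ 1 (mod m)` that
channel is the successor of `σ(k)`, and the terminal-cost condition at `x_N` bounds this by
the old terminal cost `F_{σ(k)}(x_N)`. -/

theorem shifted_trajectory_eq {S U : Type*} (step : ℕ → S → U → S) (k N : ℕ)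
    (x xh : ℕ → S) (u uh : ℕ → U)
    (hdyn : ∀ i < N, x (i + 1) = step (k + i) (x i) (u i))
    (hxhdyn : ∀ i < N, xh (i + 1) = step (k + 1 + i) (xh i) (uh i))
    (huh : ∀ i, i + 2 ≤ N → uh i = u (i + 1)) (hxh0 : xh 0 = x 1) :
    ∀ i, i + 1 ≤ N → xh i = x (i + 1) := by
  intro i
  induction i with
  | zero => exact fun _ => hxh0
  | succ j ih =>
    intro hj
    rw [hxhdyn j (by omega), ih (by omega), huh j hj, add_right_comm, add_assoc,
      ← hdyn (j + 1) (by omega)]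

theorem sum_range_succ_eq_of_shift {M : Type*} [AddCommGroup M] (f g : ℕ → M) (n : ℕ)
    (hshift : ∀ i < n, g i = f (i + 1)) :
    ∑ i ∈ range (n + 1), g i = ∑ i ∈ range (n + 1), f i - f 0 + g n := by
  rw [sum_range_succ, sum_range_succ' f,
    sum_congr rfl fun i hi => hshift i (mem_range.mp hi)]
  abel

theorem mulVec_add_mulVec_neg_feedback {ι κ R : Type*} [Fintype ι] [Fintype κ] [Ring R]
    (A : Matrix ι ι R) (B : Matrix ι κ R) (K : Matrix κ ι R) (x : ι → R) :
    A *ᵥ x + B *ᵥ -(K *ᵥ x) = (A - B * K) *ᵥ x := by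
  rw [sub_mulVec, mulVec_neg, ← mulVec_mulVec, sub_eq_add_neg]

theorem stmt_1_general {n p : ℕ} (m : ℕ) (hm : 1 ≤ m) (N : ℕ) (hN : 1 ≤ N)
    (hNm : N % m = 1 % m)
    (A : Matrix (Fin n) (Fin n) ℝ)
    (B : ℕ → Matrix (Fin n) (Fin p) ℝ)
    (q : Matrix (Fin n) (Fin n) ℝ)
    (r : Matrix (Fin p) (Fin p) ℝ)
    (K : ℕ → Matrix (Fin p) (Fin n) ℝ)
    (F : ℕ → (Fin n → ℝ) → ℝ)
    (σ : ℕ → ℕ) (hσ : ∀ k, σ k = k % m + 1)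
    (hterm : ∀ s, 1 ≤ s → s ≤ m → ∀ x : Fin n → ℝ,
      F (s % m + 1) ((A - B (s % m + 1) * K (s % m + 1)).mulVec x)
          + x ⬝ᵥ (q.mulVec x)
          + ((K (s % m + 1)).mulVec x) ⬝ᵥ (r.mulVec ((K (s % m + 1)).mulVec x))
        ≤ F s x)
    (k : ℕ)
    (x : ℕ → Fin n → ℝ) (u : ℕ → Fin p → ℝ)
    (hdyn : ∀ i < N, x (i + 1) = A.mulVec (x i) + (B (σ (k + i))).mulVec (u i))
    (uh : ℕ → Fin p → ℝ) (xh : ℕ → Fin n → ℝ)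
    (huh1 : ∀ i, i + 2 ≤ N → uh i = u (i + 1))
    (huh2 : uh (N - 1) = -((K (σ (k + 1))).mulVec (x N)))
    (hxh0 : xh 0 = x 1)
    (hxhdyn : ∀ i < N, xh (i + 1) = A.mulVec (xh i) + (B (σ (k + 1 + i))).mulVec (uh i)) :
    (∀ i, i + 1 ≤ N → xh i = x (i + 1)) ∧ σ (k + N) = σ (k + 1) ∧
      F (σ (k + 1)) (xh N)
          + ∑ i ∈ Finset.range N,
              ((xh i) ⬝ᵥ (q.mulVec (xh i)) + (uh i) ⬝ᵥ (r.mulVec (uh i)))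
        ≤ F (σ k) (x N)
            + ∑ i ∈ Finset.range N,
                ((x i) ⬝ᵥ (q.mulVec (x i)) + (u i) ⬝ᵥ (r.mulVec (u i)))
            - (x 0) ⬝ᵥ (q.mulVec (x 0)) - (u 0) ⬝ᵥ (r.mulVec (u 0)) := by
  have hstates := shifted_trajectory_eq (fun j x u => A *ᵥ x + B (σ j) *ᵥ u) k N x xh u uh
    hdyn hxhdyn huh1 hxh0
  have hσN : σ (k + N) = σ (k + 1) := by rw [hσ, hσ, Nat.ModEq.add_left k hNm]
  refine ⟨hstates, hσN, ?_⟩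
  obtain ⟨M, rfl⟩ : ∃ M, N = M + 1 := ⟨N - 1, by omega⟩
  rw [Nat.add_sub_cancel] at huh2
  have hσsucc : σ k % m + 1 = σ (k + 1) := by rw [hσ, hσ, Nat.mod_add_mod]
  have hxhM : xh M = x (M + 1) := hstates M le_rfl
  have hxhN : xh (M + 1) = (A - B (σ (k + 1)) * K (σ (k + 1))) *ᵥ x (M + 1) := by
    rw [hxhdyn M (by omega), hxhM, huh2, add_right_comm, add_assoc, hσN,
      mulVec_add_mulVec_neg_feedback]
  have hcost := sum_range_succ_eq_of_shift (fun i => x i ⬝ᵥ q *ᵥ x i + u i ⬝ᵥ r *ᵥ u i)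
    (fun i => xh i ⬝ᵥ q *ᵥ xh i + uh i ⬝ᵥ r *ᵥ uh i) M
    fun i hi => by simp only [hstates i (by omega), huh1 i (by omega)]
  have hterminal := hterm (σ k) (by rw [hσ]; omega)
    (by rw [hσ]; have := Nat.mod_lt k hm; omega) (x (M + 1))
  rw [hσsucc] at hterminal
  simp only [hcost, hxhN, hxhM, huh2, mulVec_neg, dotProduct_neg, neg_dotProduct, neg_neg]
  linarith

/-- Candidate-solution cost decrease for multiplexed MPC.  `σ k = (k % m) + 1` is the
m-periodic channel index.  If the terminal costs satisfy the decrease condition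
`F_{σ⁺}((A − B_{σ⁺}K_{σ⁺})x) + xᵀqx + (K_{σ⁺}x)ᵀr(K_{σ⁺}x) ≤ F_σ(x)` for channels
`σ ∈ {1,…,m}`, `N ≡ 1 (mod m)`, and the candidate plan is the one-step shift of the
time-`k` plan with the terminal feedback move appended, then the candidate states
coincide with the shifted states, `σ(k+N) = σ(k+1)`, and the candidate cost is at most
the time-`k` cost minus the first stage cost. -/
theorem stmt_1 {n p : ℕ} (m : ℕ) (hm : 1 ≤ m) (N : ℕ) (hN : 1 ≤ N)
    (hNm : N % m = 1 % m)
    (A : Matrix (Fin n) (Fin n) ℝ)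
    (B : ℕ → Matrix (Fin n) (Fin p) ℝ)
    (q : Matrix (Fin n) (Fin n) ℝ) (hq : q.IsSymm)
    (r : Matrix (Fin p) (Fin p) ℝ) (hr : r.IsSymm)
    (K : ℕ → Matrix (Fin p) (Fin n) ℝ)
    (F : ℕ → (Fin n → ℝ) → ℝ)
    (σ : ℕ → ℕ) (hσ : ∀ k, σ k = k % m + 1)
    (hterm : ∀ s, 1 ≤ s → s ≤ m → ∀ x : Fin n → ℝ,
      F (s % m + 1) ((A - B (s % m + 1) * K (s % m + 1)).mulVec x)
          + x ⬝ᵥ (q.mulVec x)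
          + ((K (s % m + 1)).mulVec x) ⬝ᵥ (r.mulVec ((K (s % m + 1)).mulVec x))
        ≤ F s x)
    (k : ℕ)
    (x : ℕ → Fin n → ℝ) (u : ℕ → Fin p → ℝ)
    (hdyn : ∀ i < N, x (i + 1) = A.mulVec (x i) + (B (σ (k + i))).mulVec (u i))
    (uh : ℕ → Fin p → ℝ) (xh : ℕ → Fin n → ℝ)
    (huh1 : ∀ i, i + 2 ≤ N → uh i = u (i + 1))
    (huh2 : uh (N - 1) = -((K (σ (k + 1))).mulVec (x N)))
    (hxh0 : xh 0 = x 1)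
    (hxhdyn : ∀ i < N, xh (i + 1) = A.mulVec (xh i) + (B (σ (k + 1 + i))).mulVec (uh i)) :
    (∀ i, i + 1 ≤ N → xh i = x (i + 1)) ∧ σ (k + N) = σ (k + 1) ∧
      F (σ (k + 1)) (xh N)
          + ∑ i ∈ Finset.range N,
              ((xh i) ⬝ᵥ (q.mulVec (xh i)) + (uh i) ⬝ᵥ (r.mulVec (uh i)))
        ≤ F (σ k) (x N)
            + ∑ i ∈ Finset.range N,
                ((x i) ⬝ᵥ (q.mulVec (x i)) + (u i) ⬝ᵥ (r.mulVec (u i)))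
            - (x 0) ⬝ᵥ (q.mulVec (x 0)) - (u 0) ⬝ᵥ (r.mulVec (u 0)) :=
  stmt_1_general m hm N hN hNm A B q r K F σ hσ hterm k x u hdyn uh xh huh1 huh2 hxh0 hxhdyn
end

section
/- Fix m ≥ 1, n×n real matrices Φ₁,…,Φ_m, a symmetric positive semidefinite n×n matrix q̃, and k ∈ ℕ. Let ξ_{i+1} = Φ_{σ(i)} ξ_i for i ≥ k, let Ψ = Φ_{σ(k+m−1)} ⋯ Φ_{σ(k)} be the monodromy matrix, Π_i = Φ_{σ(k+i−1)} ⋯ Φ_{σ(k)} for 1 ≤ i ≤ m, and set M = Σ_{i=1}^{m} Π_iᵀ q̃ Π_i. Assume the family (j ↦ (Ψᵀ)ʲ M Ψʲ) is summable and set P_ξ = Σ_{j=0}^{∞} (Ψᵀ)ʲ M Ψʲ. Then the infinite-horizon state cost satisfies Σ_{i=0}^{∞} ξ_{k+i+1}ᵀ q̃ ξ_{k+i+1} = ξ_kᵀ P_ξ ξ_k, and P_ξ satisfies the Lyapunov equation P_ξ = Ψᵀ P_ξ Ψ + M. -/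
/-!
The closed loop satisfies `ξ (k + i) = Π_i ξ k`, and since the factors are `m`-periodic,
`Π_{jm+r} = Π_r Ψ^j`. Hence the `j`-th block of `m` consecutive stage costs equals
`ξ kᵀ (Ψᵀ)^j M Ψ^j ξ k`, and the block series sums to `ξ kᵀ P_ξ ξ k`. Because `q̃ ⪰ 0` the stage
costs are nonnegative, so the partial sums are monotone and convergence along the block
boundaries already gives convergence of the whole series. The Lyapunov equation is the series
for `P_ξ` with its first term split off.
-/

open Filter Finset Matrix

theorem hasSum_of_hasSum_sum_blocks_of_nonneg {f : ℕ → ℝ} (hf : ∀ i, 0 ≤ f i) {m : ℕ}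
    (hm : 0 < m) {a : ℝ} (h : HasSum (fun j ↦ ∑ r ∈ range m, f (j * m + r)) a) :
    HasSum f a := by
  have hblocks : ∀ J, ∑ i ∈ range (J * m), f i = ∑ j ∈ range J, ∑ r ∈ range m, f (j * m + r) := by
    intro J
    induction J with
    | zero => simp
    | succ J ih => rw [add_one_mul, sum_range_add, ih, sum_range_succ]
  rw [hasSum_iff_tendsto_nat_of_nonneg (fun j ↦ sum_nonneg fun r _ ↦ hf _)] at h
  have hmono : Monotone fun n ↦ ∑ i ∈ range n, f i := (sum_mono_set_of_nonneg hf).comp range_mono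
  rw [hasSum_iff_tendsto_nat_of_nonneg hf,
    tendsto_iff_tendsto_subseq_of_monotone hmono (tendsto_id.atTop_mul_const' hm)]
  simpa only [Function.comp_def, id, hblocks] using h

theorem tsum_pow_mul_mul_pow_eq {R : Type*} [Ring R] [TopologicalSpace R] [IsTopologicalRing R]
    [T2Space R] {A B C : R} (h : Summable fun j : ℕ ↦ A ^ j * C * B ^ j) :
    ∑' j : ℕ, A ^ j * C * B ^ j = A * (∑' j : ℕ, A ^ j * C * B ^ j) * B + C := by
  conv_lhs => rw [h.tsum_eq_zero_add, add_comm]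
  congr 1
  · rw [← h.tsum_mul_left, ← (h.mul_left A).tsum_mul_right]
    exact tsum_congr fun j ↦ by rw [pow_succ' A, pow_succ B]; simp only [mul_assoc]
  · simp

theorem recurrence_mul_add_eq_mul_pow {G : Type*} [Monoid G] {A P : ℕ → G} {m : ℕ}
    (hA : ∀ i, A (i + m) = A i) (hP0 : P 0 = 1) (hP : ∀ i, P (i + 1) = A i * P i) (j i : ℕ) :
    P (j * m + i) = P i * P m ^ j := by
  have hshift : ∀ i, P (i + m) = P i * P m := by
    intro i
    induction i with
    | zero => simp [hP0]
    | succ i ih => rw [Nat.add_right_comm, hP, ih, hP, hA, mul_assoc]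
  induction j with
  | zero => simp
  | succ j ih => rw [add_one_mul, Nat.add_right_comm, hshift, ih, pow_succ, mul_assoc]

theorem eq_recurrence_mulVec {n R : Type*} [Fintype n] [DecidableEq n] [CommSemiring R]
    {A P : ℕ → Matrix n n R} {x : ℕ → n → R} (hx : ∀ i, x (i + 1) = A i *ᵥ x i)
    (hP0 : P 0 = 1) (hP : ∀ i, P (i + 1) = A i * P i) (i : ℕ) :
    x i = P i *ᵥ x 0 := by
  induction i with
  | zero => simp [hP0]
  | succ i ih => rw [hx, ih, mulVec_mulVec, hP]

theorem dotProduct_mulVec_mulVec_eq {n R : Type*} [Fintype n] [CommSemiring R]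
    (A Q : Matrix n n R) (x : n → R) :
    A *ᵥ x ⬝ᵥ Q *ᵥ (A *ᵥ x) = x ⬝ᵥ (Aᵀ * Q * A) *ᵥ x := by
  rw [mulVec_mulVec, ← vecMul_transpose, dotProduct_mulVec, vecMul_vecMul,
    ← mul_assoc, ← dotProduct_mulVec]

theorem HasSum.dotProduct_mulVec {ι n R : Type*} [Fintype n] [CommSemiring R]
    [TopologicalSpace R] [IsTopologicalSemiring R] {f : ι → Matrix n n R} {P : Matrix n n R}
    (h : HasSum f P) (x y : n → R) :
    HasSum (fun j ↦ x ⬝ᵥ f j *ᵥ y) (x ⬝ᵥ P *ᵥ y) := by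
  let L : Matrix n n R →+ R :=
    { toFun A := x ⬝ᵥ A *ᵥ y
      map_zero' := by simp
      map_add' A B := by simp only [add_mulVec, dotProduct_add] }
  exact h.map L (continuous_const.dotProduct (continuous_id.matrix_mulVec continuous_const))

/-- State-cost formula for a linear m-periodic closed loop.  `σ k = (k % m) + 1`;
`ξ_{i+1} = Φ_{σ(i)} ξ_i` for `i ≥ k`; `Π_i` are partial products with `Π₀ = I`,
`Ψ = Π_m` the monodromy matrix, `M = Σ_{i=1}^m Π_iᵀ q̃ Π_i`.  If `j ↦ (Ψᵀ)ʲ M Ψʲ` is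
summable with sum `P_ξ`, then `Σ_{i=0}^∞ ξ_{k+i+1}ᵀ q̃ ξ_{k+i+1} = ξ_kᵀ P_ξ ξ_k` and
`P_ξ = Ψᵀ P_ξ Ψ + M`. -/
theorem stmt_8 {n : ℕ} (m : ℕ) (hm : 1 ≤ m)
    (Φ : ℕ → Matrix (Fin n) (Fin n) ℝ)
    (qt : Matrix (Fin n) (Fin n) ℝ) (hqt : qt.PosSemidef)
    (σ : ℕ → ℕ) (hσ : ∀ k, σ k = k % m + 1)
    (k : ℕ) (ξ : ℕ → Fin n → ℝ)
    (hdyn : ∀ i, k ≤ i → ξ (i + 1) = (Φ (σ i)).mulVec (ξ i))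
    (Pmat : ℕ → Matrix (Fin n) (Fin n) ℝ)
    (hPmat0 : Pmat 0 = 1)
    (hPmat : ∀ i, Pmat (i + 1) = Φ (σ (k + i)) * Pmat i)
    (Ψ : Matrix (Fin n) (Fin n) ℝ) (hΨ : Ψ = Pmat m)
    (M : Matrix (Fin n) (Fin n) ℝ)
    (hM : M = ∑ i ∈ Finset.Icc 1 m, (Pmat i)ᵀ * qt * Pmat i)
    (hsum : Summable fun j : ℕ => (Ψᵀ) ^ j * M * Ψ ^ j)
    (Pξ : Matrix (Fin n) (Fin n) ℝ)
    (hPξ : Pξ = ∑' j : ℕ, (Ψᵀ) ^ j * M * Ψ ^ j) :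
    (∑' i : ℕ, (ξ (k + i + 1)) ⬝ᵥ (qt.mulVec (ξ (k + i + 1))))
        = (ξ k) ⬝ᵥ (Pξ.mulVec (ξ k))
      ∧ Pξ = Ψᵀ * Pξ * Ψ + M := by
  have htraj : ∀ i, ξ (k + i) = Pmat i *ᵥ ξ k :=
    eq_recurrence_mulVec (x := fun i ↦ ξ (k + i)) (fun i ↦ hdyn (k + i) (Nat.le_add_right k i))
      hPmat0 hPmat
  have hperiod : ∀ j i, Pmat (j * m + i) = Pmat i * Ψ ^ j := by
    rw [hΨ]
    refine recurrence_mul_add_eq_mul_pow (fun i ↦ ?_) hPmat0 hPmat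
    rw [hσ, hσ, ← add_assoc, Nat.add_mod_right]
  have hcost_nonneg : ∀ i, 0 ≤ ξ (k + i + 1) ⬝ᵥ qt *ᵥ ξ (k + i + 1) :=
    fun i ↦ by simpa using hqt.dotProduct_mulVec_nonneg (ξ (k + i + 1))
  have hM' : M = ∑ r ∈ range m, (Pmat (r + 1))ᵀ * qt * Pmat (r + 1) := by
    rw [hM, range_eq_Ico, sum_Ico_add' (fun i ↦ (Pmat i)ᵀ * qt * Pmat i),
      ← Ico_add_one_right_eq_Icc]
  have hblock : ∀ j, ∑ r ∈ range m, ξ (k + (j * m + r) + 1) ⬝ᵥ qt *ᵥ ξ (k + (j * m + r) + 1)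
      = ξ k ⬝ᵥ ((Ψᵀ) ^ j * M * Ψ ^ j) *ᵥ ξ k := by
    intro j
    have hstate : ∀ r, ξ (k + (j * m + r) + 1) = Pmat (r + 1) *ᵥ (Ψ ^ j *ᵥ ξ k) := fun r ↦ by
      rw [add_assoc, add_assoc, htraj, hperiod, mulVec_mulVec]
    rw [← transpose_pow, ← dotProduct_mulVec_mulVec_eq, hM', sum_mulVec, dotProduct_sum]
    refine sum_congr rfl fun r _ ↦ ?_
    rw [hstate, dotProduct_mulVec_mulVec_eq]
  have hcost : HasSum (fun i ↦ ξ (k + i + 1) ⬝ᵥ qt *ᵥ ξ (k + i + 1)) (ξ k ⬝ᵥ Pξ *ᵥ ξ k) := by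
    refine hasSum_of_hasSum_sum_blocks_of_nonneg hcost_nonneg hm ?_
    simpa only [hblock, ← hPξ] using hsum.hasSum.dotProduct_mulVec (ξ k) (ξ k)
  exact ⟨hcost.tsum_eq, hPξ ▸ tsum_pow_mul_mul_pow_eq hsum⟩
end

section
/- Fix m ≥ 1 and a horizon N with N ≡ 1 (mod m). Let A be an n×n real matrix, B₁,…,B_m n×p real matrices, E an n×d real matrix, K₁,…,K_m p×n feedback matrices, and (M_{i,σ})_{i≥0, 1≤σ≤m} p×n matrices, with L-matrices defined by L_{0,σ} = I and L_{i+1,σ(k)} = A L_{i,σ(k)} + B_{σ(k+i)} M_{i,σ(k)}. Fix k ∈ ℕ, a plan (Δũ_{k+i|k})_{0≤i≤N−1} with predicted states x_{k+i+1|k} = A x_{k+i|k} + B_{σ(k+i)} Δũ_{k+i|k}, where the last planned input is the terminal feedback Δũ_{k+N|k} = −K_{σ(k+1)} x_{k+N|k}, and a disturbance w_k ∈ ℝᵈ. Suppose the time-(k+1) candidate plan perturbs the remaining planned inputs by Δũ_{k+j|k+1} = Δũ_{k+j|k} + M_{j−1,σ(k+1)} E w_k for 1 ≤ j ≤ N,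 and the time-(k+1) predictions start from x_{k+1|k+1} = x_{k+1|k} + E w_k and follow the same dynamics. Then the candidate terminal state satisfies x_{k+N+1|k+1} = (A − B_{σ(k+N)} K_{σ(k+1)}) x_{k+N|k} + (A L_{N−1,σ(k+1)} + B_{σ(k+N)} M_{N−1,σ(k+1)}) E w_k. -/
open Matrix

/-- Terminal state of the shifted-and-perturbed candidate plan in robust multiplexed MPC.
`σ k = (k % m) + 1` is the m-periodic channel index; `L_{0,σ} = I` and
`L_{i+1,σ(k)} = A L_{i,σ(k)} + B_{σ(k+i)} M_{i,σ(k)}`.  Given a time-`k` plan whose last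
planned input is the terminal feedback `Δũ_{k+N|k} = −K_{σ(k+1)}x_{k+N|k}`, and the
time-`(k+1)` candidate plan perturbing the remaining inputs by `M_{j−1,σ(k+1)}Ew_k` and
starting from `x_{k+1|k+1} = x_{k+1|k} + Ew_k`, the candidate terminal state is
`(A − B_{σ(k+N)}K_{σ(k+1)})x_{k+N|k} + (AL_{N−1,σ(k+1)} + B_{σ(k+N)}M_{N−1,σ(k+1)})Ew_k`.
Here `x' j` denotes `x_{k+j|k+1}` and `Δu' j` denotes `Δũ_{k+j|k+1}`. -/
theorem stmt_12 {n p d : ℕ} (m : ℕ) (hm : 1 ≤ m) (N : ℕ) (hN : 1 ≤ N)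
    (hNm : N % m = 1 % m)
    (A : Matrix (Fin n) (Fin n) ℝ) (B : ℕ → Matrix (Fin n) (Fin p) ℝ)
    (E : Matrix (Fin n) (Fin d) ℝ)
    (K : ℕ → Matrix (Fin p) (Fin n) ℝ)
    (M : ℕ → ℕ → Matrix (Fin p) (Fin n) ℝ)
    (σ : ℕ → ℕ) (hσ : ∀ k, σ k = k % m + 1)
    (L : ℕ → ℕ → Matrix (Fin n) (Fin n) ℝ)
    (hL0 : ∀ s, L 0 s = 1)
    (hL : ∀ k i, L (i + 1) (σ k) = A * L i (σ k) + B (σ (k + i)) * M i (σ k))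
    (k : ℕ) (w : Fin d → ℝ)
    (Δu : ℕ → Fin p → ℝ) (xp : ℕ → Fin n → ℝ)
    (hpdyn : ∀ i < N, xp (i + 1) = A.mulVec (xp i) + (B (σ (k + i))).mulVec (Δu i))
    (hterm : Δu N = -((K (σ (k + 1))).mulVec (xp N)))
    (Δu' : ℕ → Fin p → ℝ) (x' : ℕ → Fin n → ℝ)
    (hu' : ∀ j, 1 ≤ j → j ≤ N →
      Δu' j = Δu j + (M (j - 1) (σ (k + 1))).mulVec (E.mulVec w))
    (hx'1 : x' 1 = xp 1 + E.mulVec w)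
    (hx'dyn : ∀ i, 1 ≤ i → i ≤ N →
      x' (i + 1) = A.mulVec (x' i) + (B (σ (k + i))).mulVec (Δu' i)) :
    x' (N + 1)
      = (A - B (σ (k + N)) * K (σ (k + 1))).mulVec (xp N)
        + (A * L (N - 1) (σ (k + 1))
            + B (σ (k + N)) * M (N - 1) (σ (k + 1))).mulVec (E.mulVec w) := by
  have key : ∀ j, 1 ≤ j → j ≤ N →
      x' j = xp j + (L (j - 1) (σ (k + 1))).mulVec (E.mulVec w) := by
    intro j
    induction j with
    | zero => omega
    | succ i ih =>
      intro _ hjN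
      rcases Nat.eq_or_lt_of_le (Nat.one_le_iff_ne_zero.mpr (by omega) : 1 ≤ i + 1) with h1 | h1
      · -- i = 0
        have hi0 : i = 0 := by omega
        subst hi0
        simpa [hL0] using hx'1
      · -- i ≥ 1
        have hi1 : 1 ≤ i := by omega
        have hiN : i ≤ N := by omega
        have hx := hx'dyn i hi1 (by omega)
        have hu := hu' i hi1 (by omega)
        have hLrec := hL (k + 1) (i - 1)
        have hidx : k + 1 + (i - 1) = k + i := by omega
        have hi' : i - 1 + 1 = i := by omega
        rw [hidx, hi'] at hLrec
        rw [hx, hu, ih hi1 hiN, hpdyn i (by omega)]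
        simp only [Nat.add_sub_cancel]
        rw [hLrec]
        simp only [Matrix.mulVec_add, Matrix.add_mulVec, ← Matrix.mulVec_mulVec]
        abel
  have hxN := key N hN le_rfl
  have hx := hx'dyn N hN le_rfl
  have hu := hu' N hN le_rfl
  have hLrec := hL (k + 1) (N - 1)
  have hidx : k + 1 + (N - 1) = k + N := by omega
  rw [hidx] at hLrec
  have hN' : N - 1 + 1 = N := by omega
  rw [hN'] at hLrec
  rw [hx, hu, hterm, hxN]
  simp only [Matrix.mulVec_add, Matrix.add_mulVec, Matrix.sub_mulVec, Matrix.mulVec_neg,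
    Matrix.neg_mulVec, ← Matrix.mulVec_mulVec]
  abel
end

section
/- Fix m ≥ 1 and a horizon N with N ≡ 1 (mod m). Let A be an n×n real matrix, B₁,…,B_m n×p real matrices, E an n×d real matrix, W ⊆ ℝᵈ a set of disturbances, 𝕏 ⊆ ℝⁿ and 𝕌₁,…,𝕌_m ⊆ ℝᵖ constraint sets, K₁,…,K_m p×n feedback matrices, (M_{i,σ}) p×n matrices, and L-matrices defined by L_{0,σ} = I and L_{i+1,σ(k)} = A L_{i,σ(k)} + B_{σ(k+i)} M_{i,σ(k)}. Define tightened constraint sets by the recursions X_{0,σ} = 𝕏, X_{i+1,σ(k)} = X_{i,σ(k+1)} ∼ L_{i,σ(k+1)}·E·W, and U_{0,σ(k)} = 𝕌_{σ(k)}, U_{i,σ(k)} = U_{i−1,σ(k+1)} ∼ M_{i−1,σ(k+1)}·E·W, where S·T denotes the image of set T and ∼ is the Pontryagin difference. Let terminal sets T₁,…,T_m satisfy: for all x ∈ T_{σ(k)} and w ∈ W, (A − B_{σ(k+N)} K_{σ(k+1)}) x + (A L_{N−1,σ(k+1)} + B_{σ(k+N)} M_{N−1,σ(k+1)}) E w ∈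 T_{σ(k+1)}, −K_{σ(k+1)} x ∈ U_{N,σ(k)}, and T_{σ(k)} ⊆ X_{N,σ(k)}. Suppose at time k there is a feasible plan: inputs Δũ_{k+i|k} ∈ U_{i,σ(k)} for 0 ≤ i ≤ N−1, with predicted states x_{k+i+1|k} = A x_{k+i|k} + B_{σ(k+i)} Δũ_{k+i|k} satisfying x_{k+i|k} ∈ X_{i,σ(k)} for 1 ≤ i ≤ N−1 and x_{k+N|k} ∈ T_{σ(k)}, starting from x_{k|k} = x_k. Then for every disturbance w_k ∈ W, the candidate plan at time k+1 defined by Δũ_{k+i+1|k+1} = Δũ_{k+i+1|k} + M_{i,σ(k+1)} E w_k for 0 ≤ i ≤ N−2 and Δũ_{k+N|k+1} = −K_{σ(k+1)} x_{k+N|k} + M_{N−1,σ(k+1)} E w_k, with predictions starting from x_{k+1} = x_{k+1|k} + E w_k, is feasible: Δũ_{k+i|k+1} ∈ U_{i,σ(k+1)} for 0 ≤ i ≤ N−1, x_{k+1+i|k+1} ∈ X_{i,σ(k+1)} for 1 ≤ i ≤ N−1, and x_{k+1+N|k+1} ∈ T_{σ(k+1)}. In particular x_{k+1} ∈ 𝕏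 and the applied input Δũ_{k+1|k+1} ∈ 𝕌_{σ(k+1)}. -/
open Matrix

/-- The Pontryagin difference of two sets: `A ∼ B = {a | a + b ∈ A for all b ∈ B}`. -/
def pontryaginDiff {V : Type*} [Add V] (A B : Set V) : Set V :=
  {a | ∀ b ∈ B, a + b ∈ A}

/-- Robust feasibility of robust multiplexed MPC.  `σ k = (k % m) + 1` is the m-periodic
channel index; `Xs`, `Us` are the constraint-tightened state and input constraint sets,
obtained from `𝕏` (`X0`) and `𝕌_σ` (`U0 σ`) via Pontryagin differences with the disturbance
transfer sets `L_{i,σ}·E·W` and `M_{i,σ}·E·W`, and `T` is the family of terminal sets with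
the robust invariance properties.  If the plan at time `k` is feasible, then for every
disturbance `w ∈ W` the shifted-and-perturbed candidate plan at time `k+1` is feasible;
in particular the successor state `x_{k+1} = x' 0` lies in `𝕏` and the applied input
`Δũ_{k+1|k+1} = Δu' 0` lies in `𝕌_{σ(k+1)}`.  Here `x' j` denotes `x_{k+1+j|k+1}` and
`Δu' j` denotes `Δũ_{k+1+j|k+1}`. -/
theorem stmt_13 {n p d : ℕ} (m : ℕ) (hm : 1 ≤ m) (N : ℕ) (hN : 1 ≤ N)
    (hNm : N % m = 1 % m)
    (A : Matrix (Fin n) (Fin n) ℝ) (B : ℕ → Matrix (Fin n) (Fin p) ℝ)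
    (E : Matrix (Fin n) (Fin d) ℝ)
    (W : Set (Fin d → ℝ)) (X0 : Set (Fin n → ℝ)) (U0 : ℕ → Set (Fin p → ℝ))
    (K : ℕ → Matrix (Fin p) (Fin n) ℝ)
    (M : ℕ → ℕ → Matrix (Fin p) (Fin n) ℝ)
    (σ : ℕ → ℕ) (hσ : ∀ k, σ k = k % m + 1)
    (L : ℕ → ℕ → Matrix (Fin n) (Fin n) ℝ)
    (hL0 : ∀ s, L 0 s = 1)
    (hL : ∀ k i, L (i + 1) (σ k) = A * L i (σ k) + B (σ (k + i)) * M i (σ k))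
    (Xs : ℕ → ℕ → Set (Fin n → ℝ))
    (hXs0 : ∀ s, Xs 0 s = X0)
    (hXs : ∀ k i, Xs (i + 1) (σ k) =
      pontryaginDiff (Xs i (σ (k + 1)))
        ((fun w => (L i (σ (k + 1))).mulVec (E.mulVec w)) '' W))
    (Us : ℕ → ℕ → Set (Fin p → ℝ))
    (hUs0 : ∀ s, Us 0 s = U0 s)
    (hUs : ∀ k i, Us (i + 1) (σ k) =
      pontryaginDiff (Us i (σ (k + 1)))
        ((fun w => (M i (σ (k + 1))).mulVec (E.mulVec w)) '' W))
    (T : ℕ → Set (Fin n → ℝ))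
    (hTinv : ∀ k, ∀ x ∈ T (σ k), ∀ w ∈ W,
      ((A - B (σ (k + N)) * K (σ (k + 1))).mulVec x
          + (A * L (N - 1) (σ (k + 1))
              + B (σ (k + N)) * M (N - 1) (σ (k + 1))).mulVec (E.mulVec w))
        ∈ T (σ (k + 1)))
    (hTU : ∀ k, ∀ x ∈ T (σ k), -((K (σ (k + 1))).mulVec x) ∈ Us N (σ k))
    (hTX : ∀ k, T (σ k) ⊆ Xs N (σ k))
    (k : ℕ) (xk : Fin n → ℝ)
    (Δu : ℕ → Fin p → ℝ) (xp : ℕ → Fin n → ℝ)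
    (hfeasu : ∀ i < N, Δu i ∈ Us i (σ k))
    (hxp0 : xp 0 = xk)
    (hpdyn : ∀ i < N, xp (i + 1) = A.mulVec (xp i) + (B (σ (k + i))).mulVec (Δu i))
    (hfeasx : ∀ i, 1 ≤ i → i ≤ N - 1 → xp i ∈ Xs i (σ k))
    (hfeasT : xp N ∈ T (σ k)) :
    ∀ w ∈ W, ∀ (Δu' : ℕ → Fin p → ℝ) (x' : ℕ → Fin n → ℝ),
      (∀ i, i + 2 ≤ N → Δu' i = Δu (i + 1) + (M i (σ (k + 1))).mulVec (E.mulVec w)) →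
      Δu' (N - 1) = -((K (σ (k + 1))).mulVec (xp N))
          + (M (N - 1) (σ (k + 1))).mulVec (E.mulVec w) →
      x' 0 = xp 1 + E.mulVec w →
      (∀ i < N, x' (i + 1) = A.mulVec (x' i) + (B (σ (k + 1 + i))).mulVec (Δu' i)) →
        (∀ i < N, Δu' i ∈ Us i (σ (k + 1))) ∧
        (∀ i, 1 ≤ i → i ≤ N - 1 → x' i ∈ Xs i (σ (k + 1))) ∧
        x' N ∈ T (σ (k + 1)) ∧
        x' 0 ∈ X0 ∧ Δu' 0 ∈ U0 (σ (k + 1)) := by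
  intro w hw Δu' x' hDu' hDulast hx0' hdyn'
  -- state deviation identity
  have hx' : ∀ i, i + 1 ≤ N → x' i = xp (i + 1) + (L i (σ (k + 1))).mulVec (E.mulVec w) := by
    intro i
    induction i with
    | zero => intro _; simpa [hL0, Matrix.one_mulVec] using hx0'
    | succ i ih =>
      intro hi2
      have ihx := ih (by omega)
      have hd := hdyn' i (by omega)
      have hdu := hDu' i (by omega)
      have hp := hpdyn (i + 1) (by omega)
      have hk : k + 1 + i = k + (i + 1) := by omega
      have hLi := hL (k + 1) i
      rw [hd, hdu, ihx, hLi, hk, hp]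
      simp only [Matrix.mulVec_add, Matrix.add_mulVec, ← Matrix.mulVec_mulVec]
      abel
  have hfeasu' : ∀ i < N, Δu' i ∈ Us i (σ (k + 1)) := by
    intro i hi
    rcases Nat.lt_or_ge (i + 1) N with h | h
    · rw [hDu' i (by omega)]
      have hu := hfeasu (i + 1) h
      rw [hUs k i] at hu
      exact hu _ (Set.mem_image_of_mem _ hw)
    · have hiN : i = N - 1 := by omega
      subst hiN
      rw [hDulast]
      have hu := hTU k (xp N) hfeasT
      have h2 := hUs k (N - 1)
      rw [Nat.sub_add_cancel hN] at h2
      rw [h2] at hu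
      exact hu _ (Set.mem_image_of_mem _ hw)
  refine ⟨hfeasu', ?_, ?_, ?_, ?_⟩
  · intro i hi1 hi2
    rw [hx' i (by omega)]
    rcases Nat.lt_or_ge (i + 1) N with h | h
    · have hx := hfeasx (i + 1) (by omega) (by omega)
      rw [hXs k i] at hx
      exact hx _ (Set.mem_image_of_mem _ hw)
    · have hiN : i = N - 1 := by omega
      have hx := hTX k hfeasT
      have h2 := hXs k (N - 1)
      rw [Nat.sub_add_cancel hN] at h2
      rw [h2] at hx
      have := hx _ (Set.mem_image_of_mem _ hw)
      rwa [hiN, Nat.sub_add_cancel hN]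
  · have hd := hdyn' (N - 1) (by omega)
    have hx := hx' (N - 1) (by omega)
    rw [Nat.sub_add_cancel hN] at hd hx
    have hk : k + 1 + (N - 1) = k + N := by omega
    rw [hk] at hd
    have key : x' N = (A - B (σ (k + N)) * K (σ (k + 1))).mulVec (xp N)
        + (A * L (N - 1) (σ (k + 1))
            + B (σ (k + N)) * M (N - 1) (σ (k + 1))).mulVec (E.mulVec w) := by
      rw [hd, hx, hDulast]
      simp only [Matrix.mulVec_add, Matrix.add_mulVec, Matrix.sub_mulVec,
        ← Matrix.mulVec_mulVec, Matrix.mulVec_neg]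
      abel
    rw [key]
    exact hTinv k (xp N) hfeasT w hw
  · have h1 : xp 1 ∈ Xs 1 (σ k) := by
      rcases Nat.lt_or_ge 1 N with h | h
      · exact hfeasx 1 le_rfl (by omega)
      · have hN1 : N = 1 := by omega
        rw [← hN1]; exact hTX k hfeasT
    rw [hXs k 0, hXs0] at h1
    rw [hx0']
    have : E.mulVec w ∈ (fun w => (L 0 (σ (k + 1))).mulVec (E.mulVec w)) '' W :=
      ⟨w, hw, by simp [hL0, Matrix.one_mulVec]⟩
    exact h1 _ this
  · have := hfeasu' 0 (by omega)
    rwa [hUs0] at this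
end
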